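/- For every t > 0, the kernel K_t(λ,μ) = exp(−t |(λ−μ)/(1−conj(μ)λ)|²) is strictly positive definite on 𝔻 × 𝔻, where 𝔻 is the open unit disk. -/

import Mathlib

/-!
Writing `k(z, w) = (1 - z w̄)⁻¹` for the Szegő kernel, one has
`1 - d(z, w)² = (1 - |z|²)(1 - |w|²) |k(z, w)|²`. The Szegő kernel is a sum of rank-one
positive semidefinite kernels `zᵏ w̄ᵏ`, strictly positive definite on distinct points by
Vandermonde, so by the Schur product theorem `1 - d²` is strictly positive definite. Then
`exp(-t d²) = e⁻ᵗ exp(t (1 - d²))`, and the entrywise exponential of a positive definite matrix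
is positive definite: its Taylor series is a sum of Hadamard powers, which are positive
semidefinite, and its linear term is positive definite.
-/

open scoped ComplexOrder ComplexConjugate

/-- The squared pseudo-hyperbolic distance on the open unit disk. -/
noncomputable def pseudoHypDistSq (l m : ℂ) : ℝ :=
  ‖(l - m) / (1 - conj m * l)‖ ^ 2

open Function Matrix
open scoped Nat

theorem eq_zero_of_forall_sum_mul_pow_eq_zero {R ι : Type*} [CommRing R] [IsDomain R]
    [Fintype ι] {f v : ι → R} (hf : Injective f) (hfv : ∀ k : ℕ, ∑ i, v i * f i ^ k = 0) :
    v = 0 := by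
  let e := Fintype.equivFin ι
  have hv : v ∘ e.symm = 0 :=
    Matrix.eq_zero_of_forall_pow_sum_mul_pow_eq_zero (hf.comp e.symm.injective) fun k =>
      (e.symm.sum_comp fun i => v i * f i ^ (k : ℕ)).trans (hfv k)
  funext i
  simpa using congrFun hv (e i)

namespace Matrix

variable {𝕜 ι κ : Type*} [RCLike 𝕜] [Fintype ι]

theorem PosDef.of_hasSum {M : κ → Matrix ι ι 𝕜} {A : Matrix ι ι 𝕜} (hA : HasSum M A)
    (hM : ∀ k, (M k).PosSemidef)
    (hpos : ∀ x : ι → 𝕜, x ≠ 0 → ∃ k, 0 < star x ⬝ᵥ (M k *ᵥ x)) :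
    A.PosDef := by
  have hherm : (fun k => (M k)ᴴ) = M := funext fun k => (hM k).isHermitian
  have hquad (x : ι → 𝕜) : HasSum (fun k => star x ⬝ᵥ (M k *ᵥ x)) (star x ⬝ᵥ (A *ᵥ x)) :=
    hasSum_sum fun i _ => (hasSum_sum fun j _ =>
      ((Pi.hasSum.mp (Pi.hasSum.mp hA i) j).mul_right (x j))).mul_left (star x i)
  refine .of_dotProduct_mulVec_pos ((hherm ▸ hA.matrix_conjTranspose).unique hA) fun x hx => ?_
  obtain ⟨k, hk⟩ := hpos x hx
  exact hasSum_lt (f := 0) (fun k => (hM k).dotProduct_mulVec_nonneg x) hk hasSum_zero (hquad x)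

theorem PosSemidef.map_pow {A : Matrix ι ι 𝕜} (hA : A.PosSemidef) (m : ℕ) :
    (A.map (· ^ m)).PosSemidef := by
  induction m with
  | zero => convert posSemidef_vecMulVec_self_star (1 : ι → 𝕜) using 1; ext; simp [vecMulVec]
  | succ m ih => convert ih.hadamard hA using 1; ext; simp [pow_succ]

theorem PosDef.map_exp {A : Matrix ι ι ℂ} (hA : A.PosDef) : (A.map Complex.exp).PosDef := by
  refine .of_hasSum (M := fun m => (m ! : ℝ)⁻¹ • A.map (· ^ m)) ?_
    (fun m => (hA.posSemidef.map_pow m).smul (by positivity))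
    fun x hx => ⟨1, by simpa using hA.dotProduct_mulVec_pos hx⟩
  refine Pi.hasSum.mpr fun i => Pi.hasSum.mpr fun j => ?_
  simpa [Complex.exp_eq_exp_ℂ] using NormedSpace.exp_series_hasSum_exp' (𝕂 := ℝ) (A i j)

end Matrix

noncomputable def szegoKernel (z w : ℂ) : ℂ := (1 - z * conj w)⁻¹

theorem norm_mul_conj_lt_one {z w : ℂ} (hz : ‖z‖ < 1) (hw : ‖w‖ < 1) : ‖z * conj w‖ < 1 := by
  rw [norm_mul, Complex.norm_conj]
  exact mul_lt_one_of_nonneg_of_lt_one_left (norm_nonneg z) hz hw.le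

theorem hasSum_szegoKernel {z w : ℂ} (hz : ‖z‖ < 1) (hw : ‖w‖ < 1) :
    HasSum (fun k : ℕ => z ^ k * conj w ^ k) (szegoKernel z w) := by
  simpa only [mul_pow, szegoKernel] using
    hasSum_geometric_of_norm_lt_one (norm_mul_conj_lt_one hz hw)

theorem one_sub_mul_conj_ne_zero {z w : ℂ} (hz : ‖z‖ < 1) (hw : ‖w‖ < 1) :
    1 - z * conj w ≠ 0 :=
  sub_ne_zero.mpr fun h => by simpa [← h] using norm_mul_conj_lt_one hz hw

theorem one_sub_pseudoHypDistSq {z w : ℂ} (hz : ‖z‖ < 1) (hw : ‖w‖ < 1) :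
    1 - (pseudoHypDistSq z w : ℂ) =
      (1 - ‖z‖ ^ 2) * (1 - ‖w‖ ^ 2) * (szegoKernel z w * szegoKernel w z) := by
  have h₁ := one_sub_mul_conj_ne_zero hz hw
  have h₂ := one_sub_mul_conj_ne_zero hw hz
  have h₃ : 1 - conj w * z ≠ 0 := by rwa [mul_comm]
  simp only [pseudoHypDistSq, szegoKernel, Complex.ofReal_pow, ← Complex.mul_conj', map_div₀,
    map_sub, map_mul, map_one, Complex.conj_conj]
  field_simp
  ring

theorem posDef_szegoKernel {ι : Type*} [Fintype ι] {z : ι → ℂ} (hz : ∀ i, ‖z i‖ < 1)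
    (hinj : Injective z) : (of fun i j => szegoKernel (z i) (z j)).PosDef := by
  refine .of_hasSum (M := fun k => vecMulVec (fun i => z i ^ k) (star fun i => z i ^ k))
    (Pi.hasSum.mpr fun i => Pi.hasSum.mpr fun j => by
      simpa [vecMulVec] using hasSum_szegoKernel (hz i) (hz j))
    (fun k => posSemidef_vecMulVec_self_star _) fun x hx => ?_
  obtain ⟨k, hk⟩ : ∃ k : ℕ, star (fun i => z i ^ k) ⬝ᵥ x ≠ 0 := by
    by_contra! h
    refine hx (eq_zero_of_forall_sum_mul_pow_eq_zero (star_injective.comp hinj) fun k => ?_)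
    simpa [dotProduct, mul_comm] using h k
  refine ⟨k, ?_⟩
  rw [dotProduct_mulVec, vecMul_vecMulVec, smul_dotProduct, smul_eq_mul, star_dotProduct]
  exact star_mul_self_pos (.of_ne_zero hk)

theorem posDef_one_sub_pseudoHypDistSq {ι : Type*} [Fintype ι] {z : ι → ℂ}
    (hz : ∀ i, ‖z i‖ < 1) (hinj : Injective z) :
    (of fun i j => ((1 - pseudoHypDistSq (z i) (z j) : ℝ) : ℂ)).PosDef := by
  classical
  set d : ι → ℂ := fun i => 1 - ‖z i‖ ^ 2
  have hd (i : ι) : d i ≠ 0 := by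
    simp only [d]
    exact_mod_cast (sub_pos.mpr (pow_lt_one₀ (norm_nonneg _) (hz i) two_ne_zero)).ne'
  have hdinj : Injective (diagonal d).mulVec := fun x y hxy => funext fun i =>
    mul_left_cancel₀ (hd i) (by simpa only [mulVec_diagonal] using congrFun hxy i)
  have hS := (posDef_szegoKernel hz hinj).hadamard (posDef_szegoKernel hz hinj).transpose
  have heq : (of fun i j => ((1 - pseudoHypDistSq (z i) (z j) : ℝ) : ℂ)) =
      (diagonal d)ᴴ * ((of fun i j => szegoKernel (z i) (z j)) ⊙
        (of fun i j => szegoKernel (z i) (z j))ᵀ) * diagonal d := by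
    ext i j
    simp only [of_apply, Complex.ofReal_sub, Complex.ofReal_one,
      one_sub_pseudoHypDistSq (hz i) (hz j), diagonal_conjTranspose, mul_diagonal, diagonal_mul,
      Pi.star_apply, star_sub, star_one, star_pow, RCLike.star_def, Complex.conj_ofReal,
      hadamard_apply, transpose_apply, d]
    ring
  rw [heq]
  exact hS.conjTranspose_mul_mul_same hdinj

theorem posDef_exp_neg_mul_pseudoHypDistSq {ι : Type*} [Fintype ι] {t : ℝ} (ht : 0 < t)
    {z : ι → ℂ} (hz : ∀ i, ‖z i‖ < 1) (hinj : Injective z) :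
    (of fun i j => (Real.exp (-t * pseudoHypDistSq (z i) (z j)) : ℂ)).PosDef := by
  have heq : (of fun i j => (Real.exp (-t * pseudoHypDistSq (z i) (z j)) : ℂ)) =
      Real.exp (-t) • (t • of fun i j => ((1 - pseudoHypDistSq (z i) (z j) : ℝ) : ℂ)).map
        Complex.exp := by
    ext i j
    simp only [of_apply, Matrix.map_apply, Matrix.smul_apply, Complex.real_smul,
      Complex.ofReal_exp, ← Complex.exp_add]
    push_cast
    ring_nf
  rw [heq]
  exact ((posDef_one_sub_pseudoHypDistSq hz hinj).smul ht).map_exp.smul (Real.exp_pos (-t))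

/-- For every `t > 0`, the kernel `K_t(λ,μ) = exp(−t d(λ,μ)²)`, where `d` is the
pseudo-hyperbolic distance, is strictly positive definite on the open unit disk. -/
theorem exp_neg_pseudoHypDistSq_isStrictPosKernel (t : ℝ) (ht : 0 < t)
    (n : ℕ) (l : Fin n → ℂ) (hl : ∀ i, ‖l i‖ < 1)
    (hinj : Function.Injective l) (c : Fin n → ℂ) (hc : c ≠ 0) :
    0 < ∑ i, ∑ j, c i * conj (c j) *
      (Real.exp (-t * pseudoHypDistSq (l i) (l j)) : ℂ) := by
  have hK := (posDef_exp_neg_mul_pseudoHypDistSq ht hl hinj).dotProduct_mulVec_pos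
    (star_ne_zero.mpr hc)
  simpa [dotProduct, mulVec, Finset.mul_sum, mul_comm, mul_left_comm] using hK
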